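/- Let s ≥ 1 and n ≥ 2s. Let θ⁺ ∈ ℂ^s have nonzero pairwise-distinct entries and let g⁺ ∈ ℂ^s have all entries nonzero. Then for almost every z = (z_0,…,z_{3s−1}) ∈ ℂ^{3s} (with respect to Lebesgue measure on ℂ^{3s} ≅ ℝ^{6s}) the following holds: v⁺(z_j) ≠ 0 for all j, and every triple of polynomials v, û, ũ ∈ ℂ[z] with deg v ≤ s, deg û ≤ s−1, deg ũ ≤ s−1 satisfying y_j·v(z_j) − z_j^n·û(z_j) − ũ(z_j) = 0 for all 0 ≤ j ≤ 3s−1 (where y_j = u⁺(z_j)/v⁺(z_j)) is of the form v = c·v⁺, û = c·û⁺, ũ = c·ũ⁺ for some c ∈ ℂ. -/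

import Mathlib

open Polynomial Finset Complex MeasureTheory

/-- `t_l(z) = ∏_{i ≠ l} (z·θ_i − 1)`. -/
noncomputable def tPoly (s : ℕ) (θ : Fin s → ℂ) (l : Fin s) : Polynomial ℂ :=
  ∏ i ∈ Finset.univ.erase l, (Polynomial.C (θ i) * Polynomial.X - 1)

/-- `û(z) = Σ_l g_l · θ_l^n · t_l(z)`. -/
noncomputable def uHat (s n : ℕ) (θ g : Fin s → ℂ) : Polynomial ℂ :=
  ∑ l : Fin s, Polynomial.C (g l * θ l ^ n) * tPoly s θ l

/-- `ũ(z) = −Σ_l g_l · t_l(z)`. -/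
noncomputable def uTilde (s : ℕ) (θ g : Fin s → ℂ) : Polynomial ℂ :=
  -∑ l : Fin s, Polynomial.C (g l) * tPoly s θ l

/-- `v(z) = ∏_l (z·θ_l − 1)`. -/
noncomputable def vPoly (s : ℕ) (θ : Fin s → ℂ) : Polynomial ℂ :=
  ∏ l : Fin s, (Polynomial.C (θ l) * Polynomial.X - 1)

/-- `u(z) = z^n·û(z) + ũ(z)`. -/
noncomputable def uPoly (s n : ℕ) (θ g : Fin s → ℂ) : Polynomial ℂ :=
  Polynomial.X ^ n * uHat s n θ g + uTilde s θ g

/-!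
Multiplied by `v⁺(z_j)`, the sample equations say that `u⁺·v − v⁺·(X^n·û + ũ)` vanishes at the
`3s` points `z_j`. This polynomial runs over the range of a linear map on a space of dimension
`3s + 1` whose kernel contains `(v⁺, û⁺, ũ⁺)`, so the range has dimension at most `3s`. For a
space of polynomials of dimension at most `d`, the `z ∈ ℂ^d` at which some nonzero member vanishes
at all `z_j` lie in the zero set of a nonzero polynomial (an evaluation determinant), which is
null. So for almost every `z` the samples force `u⁺·v = v⁺·(X^n·û + ũ)`.

Writing `u⁺ = v⁺·h` with `h = Σ_l g_l Σ_{j<n} (θ_l X)^j`, this says `h·v = X^n·û + ũ`, whose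
coefficients of index `s, …, 2s − 1 < n` vanish. Those coefficients are `Σ_l g_l θ_l^i ṽ(θ_l)`,
where `ṽ` is the reversal of `v` in degree `s`, so by Vandermonde `ṽ` vanishes at every `θ_l`.
The same holds for `v⁺`, so `ṽ` is a multiple of the reversal of `v⁺`, hence `v = c·v⁺`, and the
remaining identities follow by comparing the parts of degree `< n` and `≥ n`.
-/

namespace Polynomial

variable {R : Type*}

theorem eq_zero_of_X_pow_mul_add_eq_zero [Semiring R] {n : ℕ} {a b : R[X]} (hb : b.natDegree < n)
    (h : X ^ n * a + b = 0) : a = 0 ∧ b = 0 := by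
  have ha : a = 0 := by
    ext k
    simpa [coeff_X_pow_mul, coeff_eq_zero_of_natDegree_lt (hb.trans_le (Nat.le_add_left n k))]
      using congrArg (coeff · (k + n)) h
  exact ⟨ha, by simpa [ha] using h⟩

theorem coeff_geom_sum_mul [CommSemiring R] (a : R) {v : R[X]} {s n d : ℕ} (hv : v.natDegree ≤ s)
    (hsd : s ≤ d) (hdn : d < n) :
    ((∑ j ∈ range n, (C a * X) ^ j) * v).coeff d = a ^ (d - s) * (reflect s v).eval a := by
  have hG : ∀ i ≤ d, (∑ j ∈ range n, (C a * X) ^ j).coeff i = a ^ i := fun i hi => by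
    simp only [mul_pow, ← C_pow, finsetSum_coeff, coeff_C_mul_X_pow]
    simp [hi.trans_lt hdn]
  have hrefl : (reflect s v).eval a = ∑ k ∈ range (s + 1), v.coeff k * a ^ (s - k) := by
    rw [eval_eq_sum_range' (Nat.lt_succ_of_le (natDegree_reflect_le.trans (max_le le_rfl hv))),
      ← sum_range_reflect]
    refine sum_congr rfl fun k hk => ?_
    rw [coeff_reflect, revAt_le (by grind)]
    grind
  conv_lhs => rw [v.as_sum_range' (s + 1) (Nat.lt_succ_of_le hv)]
  rw [hrefl, mul_sum, mul_sum, finsetSum_coeff]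
  refine sum_congr rfl fun k hk => ?_
  have hks : k ≤ s := Nat.lt_succ_iff.mp (mem_range.mp hk)
  rw [← C_mul_X_pow_eq_monomial, mul_left_comm, coeff_C_mul, coeff_mul_X_pow',
    if_pos (hks.trans hsd), hG _ (Nat.sub_le d k), mul_left_comm, ← pow_add]
  congr 2
  omega

theorem exists_eq_C_mul_of_eval_eq_zero {K : Type*} [Field K] {s : ℕ} {θ : Fin s → K}
    (hθ : Function.Injective θ) {p r : K[X]} (hp : p.natDegree ≤ s) (hr : r.natDegree ≤ s)
    (hr0 : r ≠ 0) (hpθ : ∀ l, p.eval (θ l) = 0) (hrθ : ∀ l, r.eval (θ l) = 0) :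
    ∃ c, p = C c * r := by
  set q := ∏ l, (X - C (θ l))
  have hq : q.Monic := monic_prod_of_monic _ _ fun l _ => monic_X_sub_C (θ l)
  have hqdeg : q.natDegree = s := by simp [q]
  have hdvd : ∀ f : K[X], (∀ l, f.eval (θ l) = 0) → q ∣ f := fun f hf =>
    Finset.prod_dvd_of_coprime ((pairwise_coprime_X_sub_C hθ).set_pairwise _)
      fun l _ => dvd_iff_isRoot.mpr (hf l)
  have hp' := eq_mul_leadingCoeff_of_monic_of_dvd_of_natDegree_le hq (hdvd p hpθ) (hqdeg ▸ hp)
  have hr' := eq_mul_leadingCoeff_of_monic_of_dvd_of_natDegree_le hq (hdvd r hrθ) (hqdeg ▸ hr)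
  refine ⟨p.leadingCoeff / r.leadingCoeff, ?_⟩
  calc p = q * C p.leadingCoeff := hp'
    _ = C (p.leadingCoeff / r.leadingCoeff) * (q * C r.leadingCoeff) := by
      rw [mul_left_comm, ← C_mul, div_mul_cancel₀ _ (leadingCoeff_ne_zero.mpr hr0)]
    _ = C (p.leadingCoeff / r.leadingCoeff) * r := by rw [← hr']

theorem natDegree_prod_C_mul_X_sub_one_le {ι : Type*} [CommRing R] (t : Finset ι) (a : ι → R) :
    (∏ i ∈ t, (C (a i) * X - 1)).natDegree ≤ t.card := by
  refine (natDegree_prod_le _ _).trans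
    ((Finset.sum_le_card_nsmul t _ 1 fun i _ => ?_).trans_eq ?_)
  · compute_degree
  · simp

instance finite_degreeLE (K : Type*) [Field K] (k : ℕ) :
    Module.Finite K (degreeLE K k) := by
  rw [← degreeLT_succ_eq_degreeLE]
  exact Module.Finite.equiv (degreeLTEquiv K (k + 1)).symm

theorem finrank_degreeLE (K : Type*) [Field K] (k : ℕ) :
    Module.finrank K (degreeLE K k) = k + 1 := by
  rw [← degreeLT_succ_eq_degreeLE, (degreeLTEquiv K (k + 1)).finrank_eq, Module.finrank_fin_fun]

theorem exists_det_eval_ne_zero {K : Type*} [Field K] [Infinite K] {m : ℕ}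
    {b : Fin m → K[X]} (hb : LinearIndependent K b) :
    ∃ x : Fin m → K, (Matrix.of fun i j => (b i).eval (x j)).det ≠ 0 := by
  have hev : LinearMap.ker (LinearMap.pi fun x : K => leval (R := K) x) = ⊥ :=
    LinearMap.ker_eq_bot.mpr fun p q h => Polynomial.funext fun x => congrFun h x
  have hspan := span_flip_eq_top_iff_linearIndependent.mpr (hb.map' _ hev)
  set B₀ := Module.Basis.ofSpan hspan.ge
  set B := B₀.reindex (B₀.indexEquiv (Pi.basisFun K (Fin m)))
  have hB : ∀ j, ∃ x : K, (fun i => (b i).eval x) = B j := fun j =>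
    Module.Basis.ofSpan_subset hspan.ge ⟨_, (B₀.reindex_apply _ j).symm⟩
  choose x hx using hB
  refine ⟨x, ?_⟩
  have : (Matrix.of fun i j => (b i).eval (x j)) = (Pi.basisFun K (Fin m)).toMatrix B := by
    ext i j
    simp [Module.Basis.toMatrix_apply, ← hx j]
  rw [this, ← Module.Basis.det_apply]
  exact ((Pi.basisFun K (Fin m)).isUnit_det B).ne_zero

end Polynomial

theorem MeasureTheory.ae_of_ae_ae_cons {α : Type*} [MeasureSpace α]
    [SigmaFinite (volume : Measure α)] {N : ℕ} {p : (Fin (N + 1) → α) → Prop}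
    (hp : MeasurableSet {z | p z})
    (h : ∀ᵐ y : Fin N → α, ∀ᵐ x : α, p (Fin.cons x y)) : ∀ᵐ z, p z := by
  have hmp := (volume_preserving_piFinSuccAbove (fun _ : Fin (N + 1) => α) 0).symm
  have hcons : ∀ x : α × (Fin N → α),
      (MeasurableEquiv.piFinSuccAbove (fun _ => α) 0).symm x = Fin.cons x.1 x.2 :=
    fun x => Fin.insertNth_zero' x.1 x.2
  have hp' : MeasurableSet {x : α × (Fin N → α) | p (Fin.cons x.1 x.2)} := by
    simpa only [Set.preimage_ofPred_eq, hcons] using hmp.measurable hp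
  rw [← hmp.map_eq, ae_map_iff hmp.measurable.aemeasurable hp, Measure.volume_eq_prod]
  simp only [hcons]
  rw [Measure.ae_prod_iff_ae_ae hp', Measure.ae_ae_comm (p := fun x y => p (Fin.cons x y)) hp']
  exact h

theorem MvPolynomial.ae_eval_ne_zero {N : ℕ} {p : MvPolynomial (Fin N) ℂ} (hp : p ≠ 0) :
    ∀ᵐ z : Fin N → ℂ, eval z p ≠ 0 := by
  induction N with
  | zero =>
    obtain ⟨a, rfl⟩ := C_surjective (Fin 0) p
    exact .of_forall fun z => by simpa using hp
  | succ N ih =>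
    have hp' : finSuccEquiv ℂ N p ≠ 0 := (map_ne_zero_iff _ (AlgEquiv.injective _)).mpr hp
    have hmeas : MeasurableSet {z : Fin (N + 1) → ℂ | eval z p ≠ 0} :=
      (isClosed_singleton.preimage (continuous_eval p)).isOpen_compl.measurableSet
    refine ae_of_ae_ae_cons hmeas ?_
    filter_upwards [ih (Polynomial.leadingCoeff_ne_zero.mpr hp')] with y hy
    have hslice : (finSuccEquiv ℂ N p).map (eval y) ≠ 0 := fun h => hy <| by
      simpa [Polynomial.coeff_map] using congrArg (·.coeff (finSuccEquiv ℂ N p).natDegree) h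
    refine Set.Finite.measure_zero (s := {x | _}) ?_ _
    simpa [eval_eq_eval_mv_eval'] using Polynomial.finite_setOfPred_isRoot hslice

theorem MvPolynomial.eval_aeval_X {R σ : Type*} [CommSemiring R] (z : σ → R) (k : σ) (q : R[X]) :
    eval z (Polynomial.aeval (X k) q) = q.eval (z k) := by
  induction q using Polynomial.induction_on <;> simp_all

theorem Polynomial.ae_eval_apply_ne_zero {d : ℕ} {p : ℂ[X]} (hp : p ≠ 0) (j : Fin d) :
    ∀ᵐ z : Fin d → ℂ, p.eval (z j) ≠ 0 := by
  have hp' : aeval (MvPolynomial.X j) p ≠ 0 := fun h => hp <| Polynomial.funext fun x => by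
    simpa [MvPolynomial.eval_aeval_X] using congr(MvPolynomial.eval (fun _ => x) $h)
  filter_upwards [MvPolynomial.ae_eval_ne_zero hp'] with z hz
  rwa [MvPolynomial.eval_aeval_X] at hz

theorem Polynomial.ae_eq_zero_of_forall_eval_eq_zero (W : Submodule ℂ ℂ[X])
    [FiniteDimensional ℂ W] {d : ℕ} (hd : Module.finrank ℂ W ≤ d) :
    ∀ᵐ z : Fin d → ℂ, ∀ p ∈ W, (∀ j, p.eval (z j) = 0) → p = 0 := by
  set b := Module.finBasis ℂ W
  have hb : LinearIndependent ℂ fun i => (b i : ℂ[X]) :=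
    b.linearIndependent.map' W.subtype W.ker_subtype
  obtain ⟨x, hx⟩ := exists_det_eval_ne_zero hb
  set D : MvPolynomial (Fin d) ℂ :=
    (Matrix.of fun i j => aeval (MvPolynomial.X (Fin.castLE hd j)) (b i : ℂ[X])).det
  have hD : ∀ z, MvPolynomial.eval z D =
      (Matrix.of fun i j => (b i : ℂ[X]).eval (z (Fin.castLE hd j))).det := fun z => by
    rw [RingHom.map_det]
    congr 1
    ext i j
    simp [MvPolynomial.eval_aeval_X]
  have hD0 : D ≠ 0 := fun h => hx <| by
    simpa [h] using (hD fun k => if hk : (k : ℕ) < _ then x ⟨k, hk⟩ else 0).symm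
  filter_upwards [MvPolynomial.ae_eval_ne_zero hD0] with z hz p hp hzero
  lift p to W using hp
  have hvec : Matrix.vecMul (b.repr p)
      (Matrix.of fun i j => (b i : ℂ[X]).eval (z (Fin.castLE hd j))) = 0 := by
    ext j
    have hj := hzero (Fin.castLE hd j)
    rw [← b.sum_repr p] at hj
    simp only [Submodule.coe_sum, Submodule.coe_smul, eval_finsetSum, eval_smul,
      smul_eq_mul] at hj
    simpa [Matrix.vecMul, dotProduct] using hj
  have := Matrix.eq_zero_of_vecMul_eq_zero (hD z ▸ hz) hvec
  simp_all

section
variable (s n : ℕ) (θ g : Fin s → ℂ)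

theorem vPoly_eq_mul_tPoly (l : Fin s) : vPoly s θ = (C (θ l) * X - 1) * tPoly s θ l :=
  (Finset.mul_prod_erase _ _ (Finset.mem_univ l)).symm

theorem vPoly_ne_zero : vPoly s θ ≠ 0 := fun h => by
  simpa [vPoly, eval_prod] using congrArg (eval 0) h

theorem natDegree_vPoly_le : (vPoly s θ).natDegree ≤ s := by
  simpa [vPoly] using natDegree_prod_C_mul_X_sub_one_le Finset.univ θ

theorem natDegree_tPoly_le (l : Fin s) : (tPoly s θ l).natDegree ≤ s - 1 := by
  simpa [tPoly] using natDegree_prod_C_mul_X_sub_one_le (Finset.univ.erase l) θ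

theorem natDegree_uHat_le : (uHat s n θ g).natDegree ≤ s - 1 :=
  natDegree_sum_le_of_forall_le _ _ fun l _ =>
    (natDegree_C_mul_le _ _).trans (natDegree_tPoly_le s θ l)

theorem natDegree_uTilde_le : (uTilde s θ g).natDegree ≤ s - 1 := by
  rw [uTilde, natDegree_neg]
  exact natDegree_sum_le_of_forall_le _ _ fun l _ =>
    (natDegree_C_mul_le _ _).trans (natDegree_tPoly_le s θ l)

noncomputable def uDivV : ℂ[X] :=
  ∑ l, C (g l) * ∑ j ∈ Finset.range n, (C (θ l) * X) ^ j

theorem uPoly_eq_vPoly_mul_uDivV : uPoly s n θ g = vPoly s θ * uDivV s n θ g := by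
  rw [uPoly, uHat, uTilde, uDivV, Finset.mul_sum, Finset.mul_sum, ← sub_eq_add_neg,
    ← Finset.sum_sub_distrib]
  refine Finset.sum_congr rfl fun l _ => ?_
  rw [vPoly_eq_mul_tPoly s θ l, C_mul, C_pow]
  linear_combination -(C (g l) * tPoly s θ l) * geom_sum_mul (C (θ l) * X) n

theorem coeff_uDivV_mul {w : ℂ[X]} (hw : w.natDegree ≤ s) {d : ℕ} (hsd : s ≤ d) (hdn : d < n) :
    (uDivV s n θ g * w).coeff d = ∑ l, g l * θ l ^ (d - s) * (reflect s w).eval (θ l) := by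
  rw [uDivV, Finset.sum_mul, finsetSum_coeff]
  refine Finset.sum_congr rfl fun l _ => ?_
  rw [mul_assoc, coeff_C_mul, coeff_geom_sum_mul _ hw hsd hdn, mul_assoc]

end

section
variable {s n : ℕ} {θ g : Fin s → ℂ}

theorem eval_reflect_eq_zero_of_uPoly_mul_eq (hn : 2 * s ≤ n) (hθ : Function.Injective θ)
    (hg : ∀ l, g l ≠ 0) {w a b : ℂ[X]} (hw : w.natDegree ≤ s) (hb : b.natDegree ≤ s - 1)
    (h : uPoly s n θ g * w = vPoly s θ * (X ^ n * a + b)) (l : Fin s) :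
    (reflect s w).eval (θ l) = 0 := by
  have h' : uDivV s n θ g * w = X ^ n * a + b := mul_left_cancel₀ (vPoly_ne_zero s θ) <| by
    rw [← mul_assoc, ← uPoly_eq_vPoly_mul_uDivV, h]
  have hvan : ∀ i : Fin s, ∑ l, g l * (reflect s w).eval (θ l) * θ l ^ (i : ℕ) = 0 := fun i => by
    have hi := coeff_uDivV_mul s n θ g hw (Nat.le_add_right s i) (by omega)
    rw [h', coeff_add, coeff_X_pow_mul', if_neg (by omega),
      coeff_eq_zero_of_natDegree_lt (by omega), add_zero, Nat.add_sub_cancel_left] at hi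
    exact (Finset.sum_congr rfl fun l _ => by ring).trans hi.symm
  simpa [hg l] using congrFun (Matrix.eq_zero_of_forall_pow_sum_mul_pow_eq_zero hθ hvan) l

theorem exists_eq_C_mul_of_uPoly_mul_eq (hs : 1 ≤ s) (hn : 2 * s ≤ n)
    (hθ : Function.Injective θ) (hg : ∀ l, g l ≠ 0) {v uh ut : ℂ[X]} (hv : v.natDegree ≤ s)
    (hut : ut.natDegree ≤ s - 1)
    (h : uPoly s n θ g * v = vPoly s θ * (X ^ n * uh + ut)) :
    ∃ c, v = C c * vPoly s θ ∧ uh = C c * uHat s n θ g ∧ ut = C c * uTilde s θ g := by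
  have hV := eval_reflect_eq_zero_of_uPoly_mul_eq hn hθ hg (natDegree_vPoly_le s θ)
    (natDegree_uTilde_le s θ g) (by rw [uPoly, mul_comm])
  obtain ⟨c, hc⟩ := exists_eq_C_mul_of_eval_eq_zero hθ
    (natDegree_reflect_le.trans (max_le le_rfl hv))
    (natDegree_reflect_le.trans (max_le le_rfl (natDegree_vPoly_le s θ)))
    (reflect_eq_zero_iff.not.mpr (vPoly_ne_zero s θ))
    (eval_reflect_eq_zero_of_uPoly_mul_eq hn hθ hg hv hut h) hV
  have hvc : v = C c * vPoly s θ := by simpa [reflect_C_mul] using congrArg (reflect s) hc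
  have hsep : X ^ n * (uh - C c * uHat s n θ g) + (ut - C c * uTilde s θ g) = 0 :=
    mul_left_cancel₀ (vPoly_ne_zero s θ) <| by
      rw [uPoly] at h
      linear_combination -h + (X ^ n * uHat s n θ g + uTilde s θ g) * hvc
  have hdeg : (ut - C c * uTilde s θ g).natDegree < n :=
    (natDegree_sub_le _ _).trans_lt <| max_lt (by omega)
      ((natDegree_C_mul_le _ _).trans_lt ((natDegree_uTilde_le s θ g).trans_lt (by omega)))
  obtain ⟨h1, h2⟩ := eq_zero_of_X_pow_mul_add_eq_zero hdeg hsep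
  exact ⟨c, hvc, sub_eq_zero.mp h1, sub_eq_zero.mp h2⟩

end

noncomputable def residualMap (s n : ℕ) (θ g : Fin s → ℂ) :
    degreeLE ℂ s × degreeLE ℂ ↑(s - 1) × degreeLE ℂ ↑(s - 1) →ₗ[ℂ] ℂ[X] where
  toFun w :=
    uPoly s n θ g * (w.1 : ℂ[X]) - vPoly s θ * (X ^ n * (w.2.1 : ℂ[X]) + (w.2.2 : ℂ[X]))
  map_add' _ _ := by simp only [Prod.fst_add, Prod.snd_add, Submodule.coe_add]; ring
  map_smul' _ _ := by
    simp only [Prod.smul_fst, Prod.smul_snd, Submodule.coe_smul, smul_eq_C_mul, RingHom.id_apply]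
    ring

theorem finrank_range_residualMap_le (s n : ℕ) (θ g : Fin s → ℂ) (hs : 1 ≤ s) :
    Module.finrank ℂ (LinearMap.range (residualMap s n θ g)) ≤ 3 * s := by
  let w₀ : degreeLE ℂ s × degreeLE ℂ ↑(s - 1) × degreeLE ℂ ↑(s - 1) :=
    (⟨vPoly s θ, mem_degreeLE.mpr (natDegree_le_iff_degree_le.mp (natDegree_vPoly_le s θ))⟩,
      ⟨uHat s n θ g, mem_degreeLE.mpr (natDegree_le_iff_degree_le.mp (natDegree_uHat_le s n θ g))⟩,
      ⟨uTilde s θ g, mem_degreeLE.mpr (natDegree_le_iff_degree_le.mp (natDegree_uTilde_le s θ g))⟩)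
  have hker : 1 ≤ Module.finrank ℂ (LinearMap.ker (residualMap s n θ g)) :=
    Submodule.one_le_finrank_iff.mpr <| (Submodule.ne_bot_iff _).mpr
      ⟨w₀, LinearMap.mem_ker.mpr (by
        change uPoly s n θ g * vPoly s θ - vPoly s θ * (X ^ n * uHat s n θ g + uTilde s θ g) = 0
        rw [uPoly]; ring), fun h => vPoly_ne_zero s θ congr(($h).1.1)⟩
  have := (residualMap s n θ g).finrank_range_add_finrank_ker
  rw [Module.finrank_prod, Module.finrank_prod, finrank_degreeLE, finrank_degreeLE] at this
  omega

theorem ae_samples_recovery_general (s n : ℕ) (hs : 1 ≤ s) (hn : 2 * s ≤ n)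
    (θp gp : Fin s → ℂ)
    (hθinj : Function.Injective θp)
    (hgp : ∀ l, gp l ≠ 0) :
    ∀ᵐ z : Fin (3 * s) → ℂ ∂volume,
      (∀ j, (vPoly s θp).eval (z j) ≠ 0) ∧
      ∀ v uh ut : Polynomial ℂ,
        v.degree ≤ (s : ℕ) → uh.degree ≤ ((s - 1 : ℕ) : ℕ) →
        ut.degree ≤ ((s - 1 : ℕ) : ℕ) →
        (∀ j, ((uPoly s n θp gp).eval (z j) / (vPoly s θp).eval (z j)) * v.eval (z j)
            - (z j) ^ n * uh.eval (z j) - ut.eval (z j) = 0) →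
        ∃ c : ℂ, v = Polynomial.C c * vPoly s θp ∧
          uh = Polynomial.C c * uHat s n θp gp ∧
          ut = Polynomial.C c * uTilde s θp gp := by
  filter_upwards [ae_eq_zero_of_forall_eval_eq_zero _ (finrank_range_residualMap_le s n θp gp hs),
    ae_all_iff.mpr fun j => ae_eval_apply_ne_zero (vPoly_ne_zero s θp) j] with z hz hV
  refine ⟨hV, fun v uh ut hv huh hut hy => ?_⟩
  have hres : uPoly s n θp gp * v - vPoly s θp * (X ^ n * uh + ut) = 0 := by
    refine hz _ (LinearMap.mem_range_self (residualMap s n θp gp)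
      (⟨v, mem_degreeLE.mpr hv⟩, ⟨uh, mem_degreeLE.mpr huh⟩, ⟨ut, mem_degreeLE.mpr hut⟩))
      fun j => ?_
    have hyj := hy j
    rw [div_mul_eq_mul_div, sub_sub, sub_eq_zero, div_eq_iff (hV j)] at hyj
    simp only [eval_sub, eval_mul, eval_add, eval_pow, eval_X]
    linear_combination hyj
  exact exists_eq_C_mul_of_uPoly_mul_eq hs hn hθinj hgp (natDegree_le_iff_degree_le.mpr hv)
    (natDegree_le_iff_degree_le.mpr hut) (sub_eq_zero.mp hres)

/-- Theorem `thm:gen_samples`: for almost every `z ∈ ℂ^{3s}` (Lebesgue measure),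
`v⁺(z_j) ≠ 0` for all `j`, and any `v, û, ũ` of degrees `≤ s, ≤ s−1, ≤ s−1` satisfying
`y_j v(z_j) − z_j^n û(z_j) − ũ(z_j) = 0` for all `j` are of the form `c·v⁺, c·û⁺, c·ũ⁺`. -/
theorem ae_samples_recovery (s n : ℕ) (hs : 1 ≤ s) (hn : 2 * s ≤ n)
    (θp gp : Fin s → ℂ)
    (hθ0 : ∀ l, θp l ≠ 0) (hθinj : Function.Injective θp)
    (hgp : ∀ l, gp l ≠ 0) :
    ∀ᵐ z : Fin (3 * s) → ℂ ∂volume,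
      (∀ j, (vPoly s θp).eval (z j) ≠ 0) ∧
      ∀ v uh ut : Polynomial ℂ,
        v.degree ≤ (s : ℕ) → uh.degree ≤ ((s - 1 : ℕ) : ℕ) →
        ut.degree ≤ ((s - 1 : ℕ) : ℕ) →
        (∀ j, ((uPoly s n θp gp).eval (z j) / (vPoly s θp).eval (z j)) * v.eval (z j)
            - (z j) ^ n * uh.eval (z j) - ut.eval (z j) = 0) →
        ∃ c : ℂ, v = Polynomial.C c * vPoly s θp ∧
          uh = Polynomial.C c * uHat s n θp gp ∧
          ut = Polynomial.C c * uTilde s θp gp :=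
  ae_samples_recovery_general s n hs hn θp gp hθinj hgp
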